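/- arXiv:1811.07959 — 2 statements merged into one kernel-verified Lean document; each statement's English description precedes it below -/
import Mathlib

section
/- Let P = (X, ≤) be a chain complete N-free poset with at least two elements. Then either P is a disjoint sum of at least two nonempty parts (i.e., there exists a nonempty proper subset A of X such that no element of A is comparable to any element of X \ A), or P is a linear sum of at least two nonempty parts (i.e., there exists a nonempty proper subset A of X such that every element of A is strictly below every element of X \ A). -/
/-- `(a,b,c,d)` is an `N` in the poset: the four elements are distinct, `a < b`, `c < b`,
`c < d`, and these are the only comparabilities among them. -/
def IsN {X : Type*} [PartialOrder X] (a b c d : X) : Prop :=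
  a ≠ b ∧ a ≠ c ∧ a ≠ d ∧ b ≠ c ∧ b ≠ d ∧ c ≠ d ∧
  a < b ∧ c < b ∧ c < d ∧
  (¬ a ≤ c ∧ ¬ c ≤ a) ∧ (¬ a ≤ d ∧ ¬ d ≤ a) ∧ (¬ b ≤ d ∧ ¬ d ≤ b)

/-- A poset is `N`-free if it contains no `N`. -/
def NFree (X : Type*) [PartialOrder X] : Prop :=
  ∀ a b c d : X, ¬ IsN a b c d

/-- `inc(x)`: the set of elements incomparable to `x`. -/
def incP {X : Type*} [PartialOrder X] (x : X) : Set X :=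
  {y | ¬ x ≤ y ∧ ¬ y ≤ x}

/-- The comparability graph of a poset. -/
def compGraph (X : Type*) [PartialOrder X] : SimpleGraph X where
  Adj u v := u < v ∨ v < u
  symm := by constructor; intro u v h; exact Or.symm h
  loopless := by constructor; intro u h; rcases h with h | h <;> exact lt_irrefl u h

/-- `A` is a module of the poset: every element outside `A` relates in the same way
to all elements of `A`. -/
def PModule {X : Type*} [PartialOrder X] (A : Set X) : Prop :=
  ∀ v ∉ A, ∀ a ∈ A, ∀ a' ∈ A, (v < a → v < a') ∧ (a < v → a' < v)

/-- `C⁺_x`: elements above `x` comparable to all elements of `inc(x)`. -/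
def Cplus {X : Type*} [PartialOrder X] (x : X) : Set X :=
  {y | x < y ∧ ∀ z ∈ incP x, (y ≤ z ∨ z ≤ y)}

/-- `C⁻_x`: elements below `x` comparable to all elements of `inc(x)`. -/
def Cminus {X : Type*} [PartialOrder X] (x : X) : Set X :=
  {y | y < x ∧ ∀ z ∈ incP x, (y ≤ z ∨ z ≤ y)}

/-- A poset is chain complete if every nonempty chain has a supremum and an infimum. -/
def ChainComplete (X : Type*) [PartialOrder X] : Prop :=
  ∀ C : Set X, C.Nonempty → IsChain (· ≤ ·) C → (∃ s, IsLUB C s) ∧ (∃ i, IsGLB C i)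


/-!
If the comparability graph is disconnected, one of its connected components is a part of a
disjoint sum. Otherwise chain completeness and Zorn's lemma give a minimal element `p` strictly
below a maximal element `m`, and `m ∈ C⁺_p`: for `z` incomparable to both, an edge of the
comparability graph leaving `{y | y ≤ m ∨ p ≤ y}` on a path from `m` to `z` would complete an `N`
with `p` and `m`. In an `N`-free poset every element outside `C⁺_x` lies strictly below every
element of `C⁺_x`, so a nonempty `C⁺_x` is the upper part of a linear sum.
-/

section

variable {X : Type*} [PartialOrder X]

theorem isN_of_lt {a b c d : X} (hab : a < b) (hcb : c < b) (hcd : c < d)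
    (hac : ¬ a ≤ c ∧ ¬ c ≤ a) (had : ¬ a ≤ d ∧ ¬ d ≤ a) (hbd : ¬ b ≤ d ∧ ¬ d ≤ b) :
    IsN a b c d :=
  ⟨hab.ne, fun h => hac.1 h.le, fun h => had.1 h.le, hcb.ne', fun h => hbd.1 h.le, hcd.ne,
    hab, hcb, hcd, hac, had, hbd⟩

theorem compGraph_reachable_of_le {a b : X} (hab : a ≤ b) : (compGraph X).Reachable a b :=
  hab.lt_or_eq.elim (fun h => SimpleGraph.Adj.reachable (Or.inl h)) fun h => h ▸ .refl a

theorem exists_disjoint_sum_of_not_preconnected (h : ¬ (compGraph X).Preconnected) :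
    ∃ A : Set X, A.Nonempty ∧ A ≠ Set.univ ∧ ∀ a ∈ A, ∀ b ∉ A, ¬ a ≤ b ∧ ¬ b ≤ a := by
  obtain ⟨u, v, huv⟩ : ∃ u v, ¬ (compGraph X).Reachable u v := by
    simpa [SimpleGraph.Preconnected] using h
  refine ⟨{y | (compGraph X).Reachable u y}, ⟨u, .refl u⟩,
    fun hA => huv (Set.eq_univ_iff_forall.mp hA v), fun a ha b hb => ⟨fun hab => ?_, fun hba => ?_⟩⟩
  · exact hb (ha.trans (compGraph_reachable_of_le hab))
  · exact hb (ha.trans (compGraph_reachable_of_le hba).symm)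

theorem ChainComplete.dual (hcc : ChainComplete X) : ChainComplete Xᵒᵈ := fun C hC hchain =>
  let ⟨hlub, hglb⟩ := hcc (OrderDual.ofDual ⁻¹' C) hC hchain.symm
  ⟨hglb, hlub⟩

theorem ChainComplete.exists_isMax_ge (hcc : ChainComplete X) (x : X) :
    ∃ m, x ≤ m ∧ IsMax m :=
  zorn_le_nonempty_Ici₀ x (fun c _ hc y hy =>
    let ⟨s, hs⟩ := (hcc c ⟨y, hy⟩ hc).1
    ⟨s, hs.1⟩) x le_rfl

theorem ChainComplete.exists_isMin_le (hcc : ChainComplete X) (x : X) :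
    ∃ p, p ≤ x ∧ IsMin p :=
  hcc.dual.exists_isMax_ge (OrderDual.toDual x)

theorem ChainComplete.exists_isMin_lt_isMax (hcc : ChainComplete X) {x y : X} (hxy : x < y) :
    ∃ p m : X, IsMin p ∧ IsMax m ∧ p < m := by
  obtain ⟨p, hpx, hp⟩ := hcc.exists_isMin_le x
  obtain ⟨m, hym, hm⟩ := hcc.exists_isMax_ge y
  exact ⟨p, m, hp, hm, hpx.trans_lt (hxy.trans_le hym)⟩

theorem NFree.mem_Cplus_of_isMin_of_isMax (hN : NFree X) (hconn : (compGraph X).Preconnected)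
    {p m : X} (hp : IsMin p) (hm : IsMax m) (hpm : p < m) : m ∈ Cplus p := by
  refine ⟨hpm, fun z hz => ?_⟩
  by_contra! hzm
  obtain ⟨w⟩ := hconn m z
  obtain ⟨⟨⟨s, t⟩, hst⟩, -, hs, ht⟩ := w.exists_boundary_dart {y | y ≤ m ∨ p ≤ y}
    (Or.inl le_rfl) (by rintro (h | h); exacts [hzm.2 h, hz.1 h])
  simp only [Set.mem_ofPred_eq, not_or] at hs ht
  have htm : ¬ m ≤ t := fun h => ht.1 (hm h)
  have htp : ¬ t ≤ p := fun h => ht.2 (hp h)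
  rcases hst with hst | hts
  · have hsm : s < m := (hs.resolve_right fun h => ht.2 (h.trans hst.le)).lt_of_ne
      (by rintro rfl; exact ht.1 (hm hst.le))
    have hps : ¬ p ≤ s := fun h => ht.2 (h.trans hst.le)
    exact hN p m s t (isN_of_lt hpm hsm hst ⟨hps, fun h => hps (hp h)⟩ ⟨ht.2, htp⟩ ⟨htm, ht.1⟩)
  · have hps : p < s := (hs.resolve_left fun h => ht.1 (hts.le.trans h)).lt_of_ne
      (by rintro rfl; exact htp hts.le)
    have hsm : ¬ s ≤ m := fun h => ht.1 (hts.le.trans h)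
    exact hN t s p m (isN_of_lt hts hps hpm ⟨htp, ht.2⟩ ⟨ht.1, htm⟩ ⟨hsm, fun h => hsm (hm h)⟩)

theorem NFree.lt_of_notMem_Cplus_of_mem_Cplus (hN : NFree X) {x a b : X} (ha : a ∉ Cplus x)
    (hb : b ∈ Cplus x) : a < b := by
  obtain ⟨hxb, hbx⟩ := hb
  have lt_of_incomp : ∀ w ∈ incP x, w < b := fun w hw =>
    ((hbx w hw).resolve_left fun h => hw.1 (hxb.le.trans h)).lt_of_ne
      (by rintro rfl; exact hw.1 hxb.le)
  by_cases hax : a ≤ x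
  · exact hax.trans_lt hxb
  by_cases hxa : x ≤ a
  · have hxa : x < a := hxa.lt_of_ne (by rintro rfl; exact hax le_rfl)
    obtain ⟨w, hw, hwa⟩ : ∃ w ∈ incP x, ¬ a ≤ w ∧ ¬ w ≤ a := by
      simpa [Cplus, hxa] using ha
    have hwb := lt_of_incomp w hw
    by_contra hab
    have hab' : ¬ a ≤ b := fun h => hab (h.lt_of_ne (by rintro rfl; exact ha ⟨hxb, hbx⟩))
    have hba : ¬ b ≤ a := fun h => hwa.2 (hwb.le.trans h)
    exact hN w b x a (isN_of_lt hwb hxb hxa ⟨hw.2, hw.1⟩ ⟨hwa.2, hwa.1⟩ ⟨hba, hab'⟩)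
  · exact lt_of_incomp a ⟨hxa, hax⟩

theorem NFree.exists_linear_sum_of_mem_Cplus (hN : NFree X) {x y : X} (hy : y ∈ Cplus x) :
    ∃ A : Set X, A.Nonempty ∧ A ≠ Set.univ ∧ ∀ a ∈ A, ∀ b ∉ A, a < b :=
  ⟨(Cplus x)ᶜ, ⟨x, fun hx => lt_irrefl x hx.1⟩, fun h => Set.eq_univ_iff_forall.mp h y hy,
    fun _ ha _ hb => hN.lt_of_notMem_Cplus_of_mem_Cplus ha (not_not.mp hb)⟩

end

theorem chainComplete_nfree_disjoint_or_linear_sum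
    {X : Type*} [PartialOrder X] [Nontrivial X]
    (hcc : ChainComplete X) (hN : NFree X) :
    (∃ A : Set X, A.Nonempty ∧ A ≠ Set.univ ∧
        ∀ a ∈ A, ∀ b ∉ A, ¬ a ≤ b ∧ ¬ b ≤ a) ∨
    (∃ A : Set X, A.Nonempty ∧ A ≠ Set.univ ∧
        ∀ a ∈ A, ∀ b ∉ A, a < b) := by
  by_cases hconn : (compGraph X).Preconnected
  · obtain ⟨y, hxy⟩ := hconn.exists_adj_of_nontrivial (Classical.arbitrary X)
    obtain ⟨p, m, hp, hm, hpm⟩ :=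
      hxy.elim hcc.exists_isMin_lt_isMax hcc.exists_isMin_lt_isMax
    exact .inr (hN.exists_linear_sum_of_mem_Cplus (hN.mem_Cplus_of_isMin_of_isMax hconn hp hm hpm))
  · exact .inl (exists_disjoint_sum_of_not_preconnected hconn)
end

section
/- Every N-free poset with at least three elements has a nontrivial module; that is, no N-free poset on at least three elements is prime. -/
section Aux

variable {X : Type*} [PartialOrder X]

omit [PartialOrder X] in
lemma nontriv_of {A : Set X} {p q r : X} (hp : p ∈ A) (hq : q ∈ A) (hpq : p ≠ q)
    (hr : r ∉ A) : ¬ (A = ∅ ∨ (∃ a : X, A = {a}) ∨ A = Set.univ) := by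
  rintro (h | ⟨a, h⟩ | h)
  · rw [h] at hp; exact hp
  · rw [h] at hp hq
    exact hpq (hp.trans hq.symm)
  · exact hr (h ▸ Set.mem_univ r)

/-- Core lemma, downward direction. -/
lemma core_lemma (hN : NFree X) {x y v a a' c₀ : X}
    (hxy : ¬ x ≤ y) (hyx : ¬ y ≤ x)
    (hc0x : c₀ < x) (hc0y : c₀ < y) (hc0v : ¬ c₀ < v)
    (ha : (∀ c, c < x → c < y → c < a) ∧ (∀ u, x < u → y < u → a < u))
    (ha' : (∀ c, c < x → c < y → c < a') ∧ (∀ u, x < u → y < u → a' < u))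
    (hva : v < a) : v < a' := by
  by_cases hvc : v ≤ c₀
  · exact lt_of_le_of_lt hvc (ha'.1 c₀ hc0x hc0y)
  have hcv' : ¬ c₀ ≤ v := fun h => h.lt_or_eq.elim hc0v (fun e => hvc e.symm.le)
  have hvx : v < x := by
    by_contra hvx
    have hxv : ¬ x ≤ v := fun h => hc0v (hc0x.trans_le h)
    have hvx' : ¬ v ≤ x := fun h => h.lt_or_eq.elim hvx (fun e => hc0v (by rw [e]; exact hc0x))
    have hax : a ≤ x ∨ x ≤ a := by
      by_contra hc; push_neg at hc
      exact hN v a c₀ x ⟨hva.ne, fun e => hvc e.le, fun e => hvx' e.le,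
        (ha.1 c₀ hc0x hc0y).ne', fun e => hc.1 e.le, hc0x.ne,
        hva, ha.1 c₀ hc0x hc0y, hc0x, ⟨hvc, hcv'⟩, ⟨hvx', hxv⟩, hc⟩
    rcases hax with h | h
    · exact hvx (hva.trans_le h)
    by_cases hvy : v < y
    · exact hN v y c₀ x ⟨hvy.ne, fun e => hvc e.le, fun e => hvx' e.le,
        hc0y.ne', fun e => hyx e.le, hc0x.ne,
        hvy, hc0y, hc0x, ⟨hvc, hcv'⟩, ⟨hvx', hxv⟩, ⟨hyx, hxy⟩⟩
    · have hyv : ¬ y ≤ v := fun h' => hc0v (hc0y.trans_le h')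
      have hvy' : ¬ v ≤ y := fun h' => h'.lt_or_eq.elim hvy (fun e => hc0v (by rw [e]; exact hc0y))
      have hay : a ≤ y ∨ y ≤ a := by
        by_contra hc; push_neg at hc
        exact hN v a c₀ y ⟨hva.ne, fun e => hvc e.le, fun e => hvy' e.le,
          (ha.1 c₀ hc0x hc0y).ne', fun e => hc.1 e.le, hc0y.ne,
          hva, ha.1 c₀ hc0x hc0y, hc0y, ⟨hvc, hcv'⟩, ⟨hvy', hyv⟩, hc⟩
      rcases hay with h' | h'
      · exact hvy (hva.trans_le h')
      · have hxa : x < a := h.lt_of_ne (fun e => hvx (by rw [e]; exact hva))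
        have hya : y < a := h'.lt_of_ne (fun e => hvy (by rw [e]; exact hva))
        exact absurd (ha.2 a hxa hya) (lt_irrefl a)
  have hvy : v < y := by
    by_contra hvy
    have hyv : ¬ y ≤ v := fun h' => hc0v (hc0y.trans_le h')
    have hvy' : ¬ v ≤ y := fun h' => h'.lt_or_eq.elim hvy (fun e => hc0v (by rw [e]; exact hc0y))
    exact hN v x c₀ y ⟨hvx.ne, fun e => hvc e.le, fun e => hvy' e.le,
      hc0x.ne', fun e => hxy e.le, hc0y.ne,
      hvx, hc0x, hc0y, ⟨hvc, hcv'⟩, ⟨hvy', hyv⟩, ⟨hxy, hyx⟩⟩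
  exact ha'.1 v hvx hvy

/-- Core lemma, upward direction (order dual of `core_lemma`). -/
lemma core_lemma' (hN : NFree X) {x y v a a' u₀ : X}
    (hxy : ¬ x ≤ y) (hyx : ¬ y ≤ x)
    (hxu : x < u₀) (hyu : y < u₀) (hvu : ¬ v < u₀)
    (ha : (∀ c, c < x → c < y → c < a) ∧ (∀ u, x < u → y < u → a < u))
    (ha' : (∀ c, c < x → c < y → c < a') ∧ (∀ u, x < u → y < u → a' < u))
    (hav : a < v) : a' < v := by
  by_cases huv : u₀ ≤ v
  · exact lt_of_lt_of_le (ha'.2 u₀ hxu hyu) huv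
  have hvu' : ¬ v ≤ u₀ := fun h => h.lt_or_eq.elim hvu (fun e => huv e.symm.le)
  have hxv : x < v := by
    by_contra hxv
    have hvx : ¬ v ≤ x := fun h => hvu (lt_of_le_of_lt h hxu)
    have hxv' : ¬ x ≤ v := fun h => h.lt_or_eq.elim hxv (fun e => hvu (by rw [← e]; exact hxu))
    have hax : a ≤ x ∨ x ≤ a := by
      by_contra hc; push_neg at hc
      exact hN x u₀ a v ⟨hxu.ne, fun e => hc.2 e.le, fun e => hxv' e.le,
        (ha.2 u₀ hxu hyu).ne', fun e => huv e.le, hav.ne,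
        hxu, ha.2 u₀ hxu hyu, hav, ⟨hc.2, hc.1⟩, ⟨hxv', hvx⟩, ⟨huv, hvu'⟩⟩
    rcases hax with h | h
    · by_cases hyv : y < v
      · exact hN x u₀ y v ⟨hxu.ne, fun e => hxy e.le, fun e => hxv' e.le,
          hyu.ne', fun e => huv e.le, hyv.ne,
          hxu, hyu, hyv, ⟨hxy, hyx⟩, ⟨hxv', hvx⟩, ⟨huv, hvu'⟩⟩
      · have hvy : ¬ v ≤ y := fun h' => hvu (lt_of_le_of_lt h' hyu)
        have hyv' : ¬ y ≤ v := fun h' => h'.lt_or_eq.elim hyv (fun e => hvu (by rw [← e]; exact hyu))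
        have hay : a ≤ y ∨ y ≤ a := by
          by_contra hc; push_neg at hc
          exact hN y u₀ a v ⟨hyu.ne, fun e => hc.2 e.le, fun e => hyv' e.le,
            (ha.2 u₀ hxu hyu).ne', fun e => huv e.le, hav.ne,
            hyu, ha.2 u₀ hxu hyu, hav, ⟨hc.2, hc.1⟩, ⟨hyv', hvy⟩, ⟨huv, hvu'⟩⟩
        rcases hay with h' | h'
        · have hax' : a < x := h.lt_of_ne (fun e => hxv (by rw [← e]; exact hav))
          have hay' : a < y := h'.lt_of_ne (fun e => hyv (by rw [← e]; exact hav))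
          exact absurd (ha.1 a hax' hay') (lt_irrefl a)
        · exact hyv (lt_of_le_of_lt h' hav)
    · exact hxv (lt_of_le_of_lt h hav)
  have hyv : y < v := by
    by_contra hyv
    have hvy : ¬ v ≤ y := fun h' => hvu (lt_of_le_of_lt h' hyu)
    have hyv' : ¬ y ≤ v := fun h' => h'.lt_or_eq.elim hyv (fun e => hvu (by rw [← e]; exact hyu))
    exact hN y u₀ x v ⟨hyu.ne, fun e => hyx e.le, fun e => hyv' e.le,
      hxu.ne', fun e => huv e.le, hxv.ne,
      hyu, hxu, hxv, ⟨hyx, hxy⟩, ⟨hyv', hvy⟩, ⟨huv, hvu'⟩⟩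
  exact ha'.2 v hxv hyv

end Aux
theorem nfree_poset_has_nontrivial_module
    {X : Type*} [PartialOrder X]
    (hcard : ∃ a b c : X, a ≠ b ∧ a ≠ c ∧ b ≠ c)
    (hN : NFree X) :
    ∃ A : Set X, PModule A ∧
      ¬ (A = ∅ ∨ (∃ a : X, A = {a}) ∨ A = Set.univ) := by
  by_cases hB : ∃ p q w : X, (¬ p ≤ q ∧ ¬ q ≤ p) ∧ ((w < p ∧ w < q) ∨ (p < w ∧ q < w))
  · -- some incomparable pair has a common lower or upper bound
    obtain ⟨x, y, w, ⟨hxy, hyx⟩, hw⟩ := hB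
    refine ⟨{z | (∀ c, c < x → c < y → c < z) ∧ (∀ u, x < u → y < u → z < u)}, ?_, ?_⟩
    · intro v hv a ha a' ha'
      have hv' : ¬ ((∀ c, c < x → c < y → c < v) ∧ (∀ u, x < u → y < u → v < u)) := hv
      have ha2 : (∀ c, c < x → c < y → c < a) ∧ (∀ u, x < u → y < u → a < u) := ha
      have ha2' : (∀ c, c < x → c < y → c < a') ∧ (∀ u, x < u → y < u → a' < u) := ha'
      constructor
      · intro hva
        rcases not_and_or.mp hv' with h | h
        · push_neg at h
          obtain ⟨c₀, h1, h2, h3⟩ := h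
          exact core_lemma hN hxy hyx h1 h2 h3 ha2 ha2' hva
        · push_neg at h
          obtain ⟨u₀, h1, h2, h3⟩ := h
          exact absurd (hva.trans (ha2.2 u₀ h1 h2)) h3
      · intro hav
        rcases not_and_or.mp hv' with h | h
        · push_neg at h
          obtain ⟨c₀, h1, h2, h3⟩ := h
          exact absurd ((ha2.1 c₀ h1 h2).trans hav) h3
        · push_neg at h
          obtain ⟨u₀, h1, h2, h3⟩ := h
          exact core_lemma' hN hxy hyx h1 h2 h3 ha2 ha2' hav
    · have hxA : x ∈ {z | (∀ c, c < x → c < y → c < z) ∧ (∀ u, x < u → y < u → z < u)} :=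
        ⟨fun c h1 _ => h1, fun u h1 _ => h1⟩
      have hyA : y ∈ {z | (∀ c, c < x → c < y → c < z) ∧ (∀ u, x < u → y < u → z < u)} :=
        ⟨fun c _ h2 => h2, fun u _ h2 => h2⟩
      have hwA : w ∉ {z | (∀ c, c < x → c < y → c < z) ∧ (∀ u, x < u → y < u → z < u)} := by
        intro hwmem
        have hm : (∀ c, c < x → c < y → c < w) ∧ (∀ u, x < u → y < u → w < u) := hwmem
        rcases hw with ⟨h1, h2⟩ | ⟨h1, h2⟩
        · exact absurd (hm.1 w h1 h2) (lt_irrefl w)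
        · exact absurd (hm.2 w h1 h2) (lt_irrefl w)
      exact nontriv_of hxA hyA (fun e => hxy e.le) hwA
  · by_cases hinc : ∃ x y : X, ¬ x ≤ y ∧ ¬ y ≤ x
    · obtain ⟨x, y, hxy, hyx⟩ := hinc
      by_cases hw : ∃ w : X, w ≠ x ∧ (w ≤ x ∨ x ≤ w)
      · -- x has a comparable mate, and no incomparable pair has a common bound
        obtain ⟨w₀, hw0x, hw0c⟩ := hw
        refine ⟨{z | z = x ∨ z ≤ x ∨ x ≤ z}, ?_, ?_⟩
        · intro v hv a ha a' ha'
          have hv' : ¬ (v = x ∨ v ≤ x ∨ x ≤ v) := hv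
          push_neg at hv'
          obtain ⟨hvx, hvlex, hxlev⟩ := hv'
          have ha2 : a = x ∨ a ≤ x ∨ x ≤ a := ha
          constructor
          · intro hva
            exfalso
            rcases ha2 with e | h | h
            · exact hvlex (by rw [← e]; exact hva.le)
            · exact hvlex ((hva.trans_le h).le)
            · rcases h.lt_or_eq with h' | h'
              · exact hB ⟨v, x, a, ⟨hvlex, hxlev⟩, Or.inr ⟨hva, h'⟩⟩
              · exact hvlex (by rw [h']; exact hva.le)
          · intro hav
            exfalso
            rcases ha2 with e | h | h
            · exact hxlev (by rw [← e]; exact hav.le)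
            · rcases h.lt_or_eq with h' | h'
              · exact hB ⟨v, x, a, ⟨hvlex, hxlev⟩, Or.inl ⟨hav, h'⟩⟩
              · exact hxlev (by rw [← h']; exact hav.le)
            · exact hxlev ((h.trans_lt hav).le)
        · have hxA : x ∈ {z : X | z = x ∨ z ≤ x ∨ x ≤ z} := Or.inl rfl
          have hwA : w₀ ∈ {z : X | z = x ∨ z ≤ x ∨ x ≤ z} := Or.inr hw0c
          have hyA : y ∉ {z : X | z = x ∨ z ≤ x ∨ x ≤ z} := by
            rintro (e | h | h)
            · exact hyx (e.le)
            · exact hyx h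
            · exact hxy h
          exact nontriv_of hwA hxA hw0x hyA
      · -- x is comparable to nothing
        push_neg at hw
        refine ⟨{z | z ≠ x}, ?_, ?_⟩
        · intro v hv a ha a' ha'
          have hvx : v = x := not_not.mp hv
          have ha2 : a ≠ x := ha
          constructor
          · intro hva
            exact absurd (show x ≤ a by rw [← hvx]; exact hva.le) (hw a ha2).2
          · intro hav
            exact absurd (show a ≤ x by rw [← hvx]; exact hav.le) (hw a ha2).1
        · obtain ⟨p, q, r, hpq, hpr, hqr⟩ := hcard
          have hxA : x ∉ {z : X | z ≠ x} := fun h => h rfl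
          by_cases hp : p = x
          · exact nontriv_of (show q ∈ {z : X | z ≠ x} from fun e => hpq (hp.trans e.symm))
              (show r ∈ {z : X | z ≠ x} from fun e => hpr (hp.trans e.symm)) hqr hxA
          · by_cases hq : q = x
            · exact nontriv_of (show p ∈ {z : X | z ≠ x} from hp)
                (show r ∈ {z : X | z ≠ x} from fun e => hqr (hq.trans e.symm)) hpr hxA
            · exact nontriv_of (show p ∈ {z : X | z ≠ x} from hp)
                (show q ∈ {z : X | z ≠ x} from hq) hpq hxA
    · -- chain case
      push_neg at hinc
      have htot : ∀ u w : X, u ≤ w ∨ w ≤ u := by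
        intro u w
        by_contra h
        push_neg at h
        exact h.2 (hinc u w h.1)
      obtain ⟨p, q, r, hpq, hpr, hqr⟩ := hcard
      -- find lo ≤ m ≤ hi with lo ≠ m, m ≠ hi
      obtain ⟨lo, m, hi, hlm, hmh, h1, h2⟩ :
          ∃ lo m hi : X, lo ≠ m ∧ m ≠ hi ∧ lo ≤ m ∧ m ≤ hi := by
        rcases htot p q with h1 | h1
        · rcases htot q r with h2 | h2
          · exact ⟨p, q, r, hpq, hqr, h1, h2⟩
          · rcases htot p r with h3 | h3
            · exact ⟨p, r, q, hpr, fun e => hqr e.symm, h3, h2⟩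
            · exact ⟨r, p, q, fun e => hpr e.symm, hpq, h3, h1⟩
        · rcases htot p r with h3 | h3
          · exact ⟨q, p, r, fun e => hpq e.symm, hpr, h1, h3⟩
          · rcases htot q r with h2 | h2
            · exact ⟨q, r, p, hqr, fun e => hpr e.symm, h2, h3⟩
            · exact ⟨r, q, p, fun e => hqr e.symm, fun e => hpq e.symm, h2, h1⟩
      refine ⟨{z | z ≤ m}, ?_, ?_⟩
      · intro v hv a ha a' ha'
        have hvm : ¬ v ≤ m := hv
        have ham : a ≤ m := ha
        have ham' : a' ≤ m := ha'
        have hmv : m < v := by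
          rcases htot v m with h | h
          · exact absurd h hvm
          · exact h.lt_of_ne (fun e => hvm (by rw [← e]))
        exact ⟨fun h => absurd (h.trans_le ham).le hvm, fun _ => lt_of_le_of_lt ham' hmv⟩
      · have hloA : lo ∈ {z : X | z ≤ m} := h1
        have hmA : m ∈ {z : X | z ≤ m} := le_refl m
        have hhiA : hi ∉ {z : X | z ≤ m} := fun h => hmh (le_antisymm h2 h)
        exact nontriv_of hloA hmA hlm hhiA
end
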